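/- Let α ∈ (1, 2). For every x ∈ ℝ, ∫₀^∞ (1 − cos(λ x))/λ^α dλ = −Γ(1 − α) · sin(π α / 2) · |x|^{α − 1}, where Γ is the Gamma function. (Via the integral representation of the renormalized zero resolvent with Ψ(λ) proportional to |λ|^α, this gives h(x) proportional to |x|^{α−1} for the symmetric strictly α-stable process.) -/

import Mathlib

open MeasureTheory Real Set

/-!
For `l > 0` and `α > 0`, `l ^ (-α) = Γ(α)⁻¹ ∫₀^∞ t ^ (α - 1) e ^ (-l t) dt`. Inserting this and
exchanging the order of integration (the integrand is nonnegative), the inner integral becomes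
the Laplace transform `∫₀^∞ e ^ (-t l) (1 - cos (l x)) dl = x² / (t (t² + x²))`. Scaling `t = |x| u`
leaves `|x| ^ (α - 1) ∫₀^∞ u ^ (α - 2) / (1 + u²) du`; the substitutions `v = u²` and
`w = v / (1 + v)` turn this into the Beta integral `B(c, 1 - c) = π / sin (π c)` with
`c = (α - 1) / 2`, and Euler's reflection formula rewrites the constant as
`-Γ(1 - α) sin (π α / 2)`.
-/

theorem integral_rpow_mul_one_sub_rpow_neg {c : ℝ} (hc0 : 0 < c) (hc1 : c < 1) :
    ∫ t in (0 : ℝ)..1, t ^ (c - 1) * (1 - t) ^ (-c) = π / sin (π * c) := by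
  have hB : Complex.betaIntegral c (1 - c) = ↑(π / sin (π * c)) := by
    have h := Complex.Gamma_mul_Gamma_eq_betaIntegral (s := c) (t := 1 - c)
      (by simpa using hc0) (by simpa using hc1)
    rw [add_sub_cancel, Complex.Gamma_one, one_mul] at h
    rw [← h, ← Gamma_mul_Gamma_one_sub c]
    push_cast [← Complex.Gamma_ofReal]
    rfl
  rw [Complex.betaIntegral] at hB
  rw [← Complex.ofReal_inj, ← hB, ← intervalIntegral.integral_ofReal]
  refine intervalIntegral.integral_congr fun t ht => ?_
  rw [uIcc_of_le zero_le_one] at ht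
  push_cast
  rw [Complex.ofReal_cpow ht.1, Complex.ofReal_cpow (sub_nonneg.2 ht.2)]
  push_cast
  ring_nf

theorem integral_Ioi_rpow_div_one_add {c : ℝ} (hc0 : 0 < c) (hc1 : c < 1) :
    ∫ v in Ioi (0 : ℝ), v ^ (c - 1) / (1 + v) = π / sin (π * c) := by
  have himg : (fun v : ℝ => v / (1 + v)) '' Ioi 0 = Ioo 0 1 := by
    ext t
    constructor
    · rintro ⟨v, hv : 0 < v, rfl⟩
      exact ⟨by positivity, (div_lt_one (by linarith)).2 (by linarith)⟩
    · rintro ⟨ht0, ht1⟩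
      refine ⟨t / (1 - t), div_pos ht0 (by linarith), ?_⟩
      field_simp
      ring
  have hderiv : ∀ v ∈ Ioi (0 : ℝ),
      HasDerivWithinAt (fun v : ℝ => v / (1 + v)) ((1 + v) ^ 2)⁻¹ (Ioi 0) v := by
    rintro v (hv : 0 < v)
    refine (((hasDerivAt_id' v).div ((hasDerivAt_id' v).const_add 1)
      (by positivity)).hasDerivWithinAt).congr_deriv ?_
    ring
  have hinj : InjOn (fun v : ℝ => v / (1 + v)) (Ioi 0) := by
    rintro a (ha : 0 < a) b (hb : 0 < b) hab
    field_simp at hab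
    linarith
  rw [← integral_rpow_mul_one_sub_rpow_neg hc0 hc1, intervalIntegral.integral_of_le zero_le_one,
    integral_Ioc_eq_integral_Ioo, ← himg,
    integral_image_eq_integral_abs_deriv_smul measurableSet_Ioi hderiv hinj]
  refine setIntegral_congr_fun measurableSet_Ioi fun v (hv : 0 < v) => ?_
  have h1v : 0 < 1 + v := by linarith
  have hsub : 1 - v / (1 + v) = (1 + v)⁻¹ := by field_simp; ring
  have := rpow_pos_of_pos h1v c
  rw [smul_eq_mul, abs_of_pos (by positivity), hsub, div_rpow hv.le h1v.le, inv_rpow h1v.le,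
    rpow_neg h1v.le, inv_inv, rpow_sub_one h1v.ne']
  field_simp

theorem integral_Ioi_rpow_div_one_add_sq {s : ℝ} (hs1 : -1 < s) (hs2 : s < 1) :
    ∫ u in Ioi (0 : ℝ), u ^ s / (1 + u ^ 2) = π / (2 * cos (π * s / 2)) := by
  have h := integral_comp_rpow_Ioi (fun v => v ^ ((s + 1) / 2 - 1) / (1 + v)) two_ne_zero
  rw [integral_Ioi_rpow_div_one_add (by linarith) (by linarith),
    show π * ((s + 1) / 2) = π * s / 2 + π / 2 by ring, sin_add_pi_div_two] at h
  rw [div_mul_eq_div_div_swap, ← h, eq_div_iff two_ne_zero, ← integral_mul_const]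
  refine setIntegral_congr_fun measurableSet_Ioi fun u (hu : 0 < u) => ?_
  rw [smul_eq_mul, abs_two, rpow_two, ← rpow_natCast, ← rpow_mul hu.le,
    show (2 : ℝ) - 1 = 1 by norm_num, rpow_one, Nat.cast_ofNat, rpow_two]
  rw [show 2 * ((s + 1) / 2 - 1) = s - 1 by ring, rpow_sub_one hu.ne']
  field_simp

theorem integral_Ioi_rpow_mul_sq_div_sq_add_sq {s x : ℝ} (hs1 : -1 < s) (hs2 : s < 1)
    (hx : x ≠ 0) :
    ∫ t in Ioi (0 : ℝ), t ^ s * (x ^ 2 / (t ^ 2 + x ^ 2))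
      = |x| ^ (s + 1) * (π / (2 * cos (π * s / 2))) := by
  have hx' : 0 < |x| := abs_pos.2 hx
  have h := integral_comp_mul_left_Ioi (fun t => t ^ s * (x ^ 2 / (t ^ 2 + x ^ 2))) 0 hx'
  rw [mul_zero, smul_eq_mul] at h
  calc ∫ t in Ioi (0 : ℝ), t ^ s * (x ^ 2 / (t ^ 2 + x ^ 2))
      = |x| * ∫ u in Ioi (0 : ℝ), (|x| * u) ^ s * (x ^ 2 / ((|x| * u) ^ 2 + x ^ 2)) := by
        rw [h, mul_inv_cancel_left₀ hx'.ne']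
    _ = |x| * ∫ u in Ioi (0 : ℝ), |x| ^ s * (u ^ s / (1 + u ^ 2)) := by
        congr 1
        refine setIntegral_congr_fun measurableSet_Ioi fun u (hu : 0 < u) => ?_
        rw [mul_rpow hx'.le hu.le, mul_pow, sq_abs]
        field_simp
        ring
    _ = |x| ^ (s + 1) * (π / (2 * cos (π * s / 2))) := by
        rw [integral_const_mul, integral_Ioi_rpow_div_one_add_sq hs1 hs2, rpow_add_one hx'.ne']
        ring

theorem integrableOn_Ioi_rpow_mul_sq_div_sq_add_sq {s x : ℝ} (hs1 : -1 < s) (hs2 : s < 1)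
    (hx : x ≠ 0) :
    IntegrableOn (fun t => t ^ s * (x ^ 2 / (t ^ 2 + x ^ 2))) (Ioi 0) := by
  have hcos : 0 < cos (π * s / 2) :=
    cos_pos_of_mem_Ioo ⟨by nlinarith [pi_pos], by nlinarith [pi_pos]⟩
  refine Integrable.of_integral_ne_zero (ne_of_gt ?_)
  rw [integral_Ioi_rpow_mul_sq_div_sq_add_sq hs1 hs2 hx]
  have := abs_pos.2 hx
  positivity

theorem exp_neg_mul_mul_cos_eq_re_cexp (t x l : ℝ) :
    exp (-t * l) * cos (l * x) = (Complex.exp ((-t + x * Complex.I) * l)).re := by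
  rw [Complex.exp_re]
  simp [mul_comm]

theorem integrableOn_Ioi_exp_neg_mul_mul_cos {t : ℝ} (ht : 0 < t) (x : ℝ) :
    IntegrableOn (fun l => exp (-t * l) * cos (l * x)) (Ioi 0) := by
  simp_rw [exp_neg_mul_mul_cos_eq_re_cexp t x]
  exact (integrableOn_exp_mul_complex_Ioi (by simpa using ht) 0).re

theorem integral_Ioi_exp_neg_mul_mul_cos {t : ℝ} (ht : 0 < t) (x : ℝ) :
    ∫ l in Ioi 0, exp (-t * l) * cos (l * x) = t / (t ^ 2 + x ^ 2) := by
  have ha : (-(t : ℂ) + x * Complex.I).re < 0 := by simpa using ht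
  simp_rw [exp_neg_mul_mul_cos_eq_re_cexp t x]
  refine (integral_re (integrableOn_exp_mul_complex_Ioi ha 0)).trans ?_
  rw [integral_exp_mul_complex_Ioi ha]
  simp [Complex.div_re, Complex.normSq, sq]

theorem integrableOn_Ioi_exp_neg_mul_mul_one_sub_cos {t : ℝ} (ht : 0 < t) (x : ℝ) :
    IntegrableOn (fun l => exp (-t * l) * (1 - cos (l * x))) (Ioi 0) := by
  simp_rw [mul_one_sub]
  exact (integrableOn_exp_mul_Ioi (neg_lt_zero.2 ht) 0).sub
    (integrableOn_Ioi_exp_neg_mul_mul_cos ht x)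

theorem integral_Ioi_exp_neg_mul_mul_one_sub_cos {t : ℝ} (ht : 0 < t) (x : ℝ) :
    ∫ l in Ioi 0, exp (-t * l) * (1 - cos (l * x)) = x ^ 2 / (t * (t ^ 2 + x ^ 2)) := by
  simp_rw [mul_one_sub]
  rw [integral_sub (integrableOn_exp_mul_Ioi (neg_lt_zero.2 ht) 0)
    (integrableOn_Ioi_exp_neg_mul_mul_cos ht x), integral_exp_mul_Ioi (neg_lt_zero.2 ht),
    integral_Ioi_exp_neg_mul_mul_cos ht x, mul_zero, exp_zero]
  field_simp
  ring

theorem inv_rpow_eq_inv_Gamma_mul_integral_Ioi {a l : ℝ} (ha : 0 < a) (hl : 0 < l) :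
    (l ^ a)⁻¹ = (Gamma a)⁻¹ * ∫ t in Ioi 0, t ^ (a - 1) * exp (-(l * t)) := by
  rw [integral_rpow_mul_exp_neg_mul_Ioi ha hl, one_div, inv_rpow hl.le]
  field_simp [(Gamma_pos_of_pos ha).ne']

theorem one_sub_cos_mul_rpow_mul_exp_eq (x s l t : ℝ) :
    (1 - cos (l * x)) * (t ^ s * exp (-(l * t))) = t ^ s * (exp (-t * l) * (1 - cos (l * x))) := by
  rw [neg_mul, mul_comm t l]
  ring

theorem integral_Ioi_one_sub_cos_mul_rpow_mul_exp {t : ℝ} (ht : 0 < t) (x s : ℝ) :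
    ∫ l in Ioi 0, (1 - cos (l * x)) * (t ^ s * exp (-(l * t)))
      = t ^ (s - 1) * (x ^ 2 / (t ^ 2 + x ^ 2)) := by
  simp_rw [one_sub_cos_mul_rpow_mul_exp_eq]
  rw [integral_const_mul, integral_Ioi_exp_neg_mul_mul_one_sub_cos ht, rpow_sub_one ht.ne']
  field_simp

theorem integral_integral_swap_of_nonneg {X Y : Type*} [MeasurableSpace X] [MeasurableSpace Y]
    {μ : Measure X} {ν : Measure Y} [SFinite μ] [SFinite ν] {f : X → Y → ℝ}
    (hf : AEStronglyMeasurable (Function.uncurry f) (μ.prod ν))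
    (hf_nonneg : ∀ᵐ y ∂ν, ∀ᵐ x ∂μ, 0 ≤ f x y)
    (hf_int : ∀ᵐ y ∂ν, Integrable (fun x => f x y) μ)
    (hf_int' : Integrable (fun y => ∫ x, f x y ∂μ) ν) :
    ∫ x, ∫ y, f x y ∂ν ∂μ = ∫ y, ∫ x, f x y ∂μ ∂ν := by
  refine integral_integral_swap ((integrable_prod_iff' hf).2 ⟨hf_int, hf_int'.congr ?_⟩)
  filter_upwards [hf_nonneg] with y hy
  exact integral_congr_ae (hy.mono fun x hx => (norm_of_nonneg hx).symm)

theorem integral_Ioi_one_sub_cos_div_rpow {α x : ℝ} (hα1 : 1 < α) (hα3 : α < 3) (hx : x ≠ 0) :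
    ∫ l in Ioi 0, (1 - cos (l * x)) / l ^ α
      = (Gamma α)⁻¹ * ∫ t in Ioi 0, t ^ (α - 2) * (x ^ 2 / (t ^ 2 + x ^ 2)) := by
  let f : ℝ → ℝ → ℝ := fun l t => (1 - cos (l * x)) * (t ^ (α - 1) * exp (-(l * t)))
  have hinner : ∀ t ∈ Ioi (0 : ℝ),
      ∫ l in Ioi 0, f l t = t ^ (α - 2) * (x ^ 2 / (t ^ 2 + x ^ 2)) := fun t ht => by
    rw [integral_Ioi_one_sub_cos_mul_rpow_mul_exp ht, sub_sub, one_add_one_eq_two]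
  have hswap : ∫ l in Ioi 0, ∫ t in Ioi 0, f l t = ∫ t in Ioi 0, ∫ l in Ioi 0, f l t := by
    refine integral_integral_swap_of_nonneg (by fun_prop) ?_ ?_ ?_
    · filter_upwards [ae_restrict_mem measurableSet_Ioi] with t ht
      exact Filter.Eventually.of_forall fun l => mul_nonneg (sub_nonneg.2 (cos_le_one _))
        (mul_nonneg (rpow_nonneg (le_of_lt ht) _) (exp_pos _).le)
    · filter_upwards [ae_restrict_mem measurableSet_Ioi] with t ht
      simp_rw [f, one_sub_cos_mul_rpow_mul_exp_eq]
      exact (integrableOn_Ioi_exp_neg_mul_mul_one_sub_cos ht x).const_mul _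
    · exact (integrableOn_Ioi_rpow_mul_sq_div_sq_add_sq (by linarith) (by linarith) hx).congr_fun
        (fun t ht => (hinner t ht).symm) measurableSet_Ioi
  calc ∫ l in Ioi 0, (1 - cos (l * x)) / l ^ α
      = ∫ l in Ioi 0, (Gamma α)⁻¹ * ∫ t in Ioi 0, f l t := by
        refine setIntegral_congr_fun measurableSet_Ioi fun l hl => ?_
        rw [integral_const_mul, div_eq_mul_inv,
          inv_rpow_eq_inv_Gamma_mul_integral_Ioi (by linarith) hl]
        ring
    _ = (Gamma α)⁻¹ * ∫ t in Ioi 0, t ^ (α - 2) * (x ^ 2 / (t ^ 2 + x ^ 2)) := by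
        rw [integral_const_mul, hswap, setIntegral_congr_fun measurableSet_Ioi hinner]

theorem inv_Gamma_mul_pi_div_two_cos {α : ℝ} (h : sin (π * α) ≠ 0) :
    (Gamma α)⁻¹ * (π / (2 * cos (π * (α - 2) / 2))) = -Gamma (1 - α) * sin (π * α / 2) := by
  have hsin2 : sin (π * α) = 2 * sin (π * α / 2) * cos (π * α / 2) := by
    rw [← sin_two_mul]; ring_nf
  have hs : sin (π * α / 2) ≠ 0 := fun h0 => h (by rw [hsin2, h0]; ring)
  have hc : cos (π * α / 2) ≠ 0 := fun h0 => h (by rw [hsin2, h0]; ring)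
  have hrefl := Gamma_mul_Gamma_one_sub α
  have hΓ : Gamma α ≠ 0 := by
    intro h0
    rw [h0, zero_mul] at hrefl
    exact div_ne_zero pi_ne_zero h hrefl.symm
  have hΓ' : Gamma (1 - α) = π / sin (π * α) / Gamma α := by
    rw [← hrefl, mul_div_cancel_left₀ _ hΓ]
  rw [show π * (α - 2) / 2 = π * α / 2 - π by ring, cos_sub_pi, hΓ', hsin2]
  field_simp

/-- For `α ∈ (1,2)` and every `x : ℝ`,
`∫₀^∞ (1 − cos(λx))/λ^α dλ = −Γ(1 − α)·sin(πα/2)·|x|^{α−1}`.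
This gives the renormalized zero resolvent `h(x) ∝ |x|^{α−1}` of the symmetric
strictly `α`-stable process. -/
theorem integral_one_sub_cos_rpow (α : ℝ) (hα : α ∈ Set.Ioo (1 : ℝ) 2) (x : ℝ) :
    ∫ l in Set.Ioi (0 : ℝ), (1 - Real.cos (l * x)) / l ^ α
      = -Real.Gamma (1 - α) * Real.sin (π * α / 2) * |x| ^ (α - 1) := by
  obtain ⟨hα1, hα2⟩ := hα
  rcases eq_or_ne x 0 with rfl | hx
  · simp [zero_rpow (sub_ne_zero.2 hα1.ne')]
  have hsin : sin (π * α) ≠ 0 := by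
    have h := sin_pos_of_pos_of_lt_pi (x := π * α - π) (by nlinarith [pi_pos])
      (by nlinarith [pi_pos])
    rw [sin_sub_pi] at h
    linarith
  rw [integral_Ioi_one_sub_cos_div_rpow hα1 (by linarith) hx,
    integral_Ioi_rpow_mul_sq_div_sq_add_sq (by linarith) (by linarith) hx,
    show α - 2 + 1 = α - 1 by ring, mul_left_comm, inv_Gamma_mul_pi_div_two_cos hsin]
  ring
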